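/- arXiv:2602.01052 — 3 statements merged into one kernel-verified Lean document; each statement's English description precedes it below -/
import Mathlib

section
/- For 0 < q < 1, a positive integer n, and a complex number s, the following identity holds: ([n]/q^{n-1})^{-s} - ([n]/q^n + 1)^{-s} = (q^n/[n])^s (q^{-s} - 1) + \sum_{k \geq 0} (-1)^k \frac{s(s+1)\cdots(s+k)}{(k+1)!} (q^n/[n])^{s+k+1}, where the series on the right converges absolutely. -/
open Complex Finset

/-- The q-analogue `[n]_q = (1 - q^n)/(1 - q)`. -/
noncomputable def qNum (q : ℝ) (n : ℕ) : ℝ := (1 - q ^ n) / (1 - q)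

/-!
With `x = q^n/[n] ∈ (0, 1)` the two left-hand bases are `q x⁻¹` and `(1 + x) x⁻¹`, so the left side
is `x^s (q^{-s} - (1 + x)^{-s})`. The series on the right is `-x^s` times the binomial series of
`(1 + x)^{-s}` with its constant term removed, because
`(-1)^k s(s+1)⋯(s+k)/(k+1)! = -(-s choose k+1)`.
-/

lemma Ring.choose_neg_eq {K : Type*} [Field K] [CharZero K] (s : K) (m : ℕ) :
    Ring.choose (-s) m = (-1) ^ m * (∏ i ∈ range m, (s + i)) / m.factorial := by
  rw [Ring.choose_eq_smul, smul_eq_mul, ← Polynomial.aeval_eq_smeval,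
    ← Polynomial.eval_map_algebraMap, descPochhammer_map, descPochhammer_eval_eq_prod_range]
  simp only [sub_eq_add_neg, ← neg_add, prod_neg, card_range]
  ring

lemma mem_eball_zero_one_of_norm_lt_one {E : Type*} [SeminormedAddCommGroup E] {z : E}
    (hz : ‖z‖ < 1) : z ∈ Metric.eball (0 : E) 1 := by
  rw [← ENNReal.ofReal_one, Metric.eball_ofReal]
  simpa using hz

namespace Complex

lemma hasSum_choose_mul_pow {z : ℂ} (hz : ‖z‖ < 1) (a : ℂ) :
    HasSum (fun k ↦ Ring.choose a k * z ^ k) ((1 + z) ^ a) := by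
  simpa [binomialSeries, mul_comm] using
    one_add_cpow_hasFPowerSeriesOnBall_zero.hasSum (mem_eball_zero_one_of_norm_lt_one hz)

lemma summable_norm_choose_mul_pow {z : ℂ} (hz : ‖z‖ < 1) (a : ℂ) :
    Summable (fun k ↦ ‖Ring.choose a k * z ^ k‖) := by
  have hr : z ∈ Metric.eball (0 : ℂ) (binomialSeries ℂ a).radius :=
    Metric.eball_subset_eball binomialSeries_radius_ge_one (mem_eball_zero_one_of_norm_lt_one hz)
  simpa [binomialSeries, mul_comm] using (binomialSeries ℂ a).summable_norm_apply hr

lemma ofReal_mul_inv_cpow_neg {c x : ℝ} (hc : 0 ≤ c) (hx : 0 < x) (s : ℂ) :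
    ((c * x⁻¹ : ℝ) : ℂ) ^ (-s) = (c : ℂ) ^ (-s) * (x : ℂ) ^ s := by
  have harg : arg (x : ℂ) ≠ Real.pi := by
    rw [arg_ofReal_of_nonneg hx.le]
    exact Real.pi_ne_zero.symm
  rw [ofReal_mul, mul_cpow_ofReal_nonneg hc (inv_nonneg.2 hx.le), ofReal_inv,
    inv_cpow _ _ harg, ← cpow_neg, neg_neg]

lemma neg_one_pow_mul_prod_div_factorial_mul_cpow_eq {x : ℝ} (hx : 0 < x) (s : ℂ) (k : ℕ) :
    (-1 : ℂ) ^ k * (∏ i ∈ range (k + 1), (s + (i : ℂ))) / ((k + 1).factorial : ℂ) *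
        (x : ℂ) ^ (s + (k : ℂ) + 1)
      = -((x : ℂ) ^ s * (Ring.choose (-s) (k + 1) * (x : ℂ) ^ (k + 1))) := by
  have hx' : (x : ℂ) ≠ 0 := ofReal_ne_zero.2 hx.ne'
  rw [show s + (k : ℂ) + 1 = s + ((k + 1 : ℕ) : ℂ) by push_cast; ring, cpow_add _ _ hx',
    cpow_natCast, Ring.choose_neg_eq, pow_succ]
  ring

lemma summable_norm_neg_one_pow_mul_prod_div_factorial_mul_cpow {x : ℝ} (hx0 : 0 < x)
    (hx1 : x < 1) (s : ℂ) :
    Summable (fun k : ℕ ↦ ‖(-1 : ℂ) ^ k * (∏ i ∈ range (k + 1), (s + (i : ℂ))) /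
      ((k + 1).factorial : ℂ) * (x : ℂ) ^ (s + (k : ℂ) + 1)‖) := by
  have hz : ‖(x : ℂ)‖ < 1 := by rwa [norm_real, Real.norm_of_nonneg hx0.le]
  simp_rw [neg_one_pow_mul_prod_div_factorial_mul_cpow_eq hx0, norm_neg, norm_mul]
  simpa only [← norm_mul] using
    ((summable_nat_add_iff 1).2 (summable_norm_choose_mul_pow hz (-s))).mul_left
      ‖(x : ℂ) ^ s‖

lemma hasSum_neg_one_pow_mul_prod_div_factorial_mul_cpow {x : ℝ} (hx0 : 0 < x) (hx1 : x < 1)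
    (s : ℂ) :
    HasSum (fun k : ℕ ↦ (-1 : ℂ) ^ k * (∏ i ∈ range (k + 1), (s + (i : ℂ))) /
      ((k + 1).factorial : ℂ) * (x : ℂ) ^ (s + (k : ℂ) + 1))
      (-((x : ℂ) ^ s * ((1 + x : ℂ) ^ (-s) - 1))) := by
  have hz : ‖(x : ℂ)‖ < 1 := by rwa [norm_real, Real.norm_of_nonneg hx0.le]
  have hTail := (hasSum_nat_add_iff' 1).2 (hasSum_choose_mul_pow hz (-s))
  simp only [sum_range_one, Ring.choose_zero_right, pow_zero, mul_one] at hTail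
  simpa only [neg_one_pow_mul_prod_div_factorial_mul_cpow_eq hx0] using
    (hTail.mul_left ((x : ℂ) ^ s)).neg

end Complex

lemma one_le_qNum {q : ℝ} (hq0 : 0 ≤ q) (hq1 : q < 1) {n : ℕ} (hn : 1 ≤ n) : 1 ≤ qNum q n := by
  rw [qNum, le_div_iff₀ (by linarith), one_mul]
  linarith [pow_le_of_le_one hq0 hq1.le (by omega : n ≠ 0)]

theorem translation_identity_one_var (q : ℝ) (hq0 : 0 < q) (hq1 : q < 1)
    (n : ℕ) (hn : 1 ≤ n) (s : ℂ) :
    Summable (fun k : ℕ =>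
      ‖(-1 : ℂ) ^ k * (∏ i ∈ Finset.range (k + 1), (s + (i : ℂ))) /
        ((k + 1).factorial : ℂ) *
        ((q ^ n / qNum q n : ℝ) : ℂ) ^ (s + (k : ℂ) + 1)‖) ∧
    ((qNum q n / q ^ (n - 1) : ℝ) : ℂ) ^ (-s)
      - ((qNum q n / q ^ n + 1 : ℝ) : ℂ) ^ (-s)
    = ((q ^ n / qNum q n : ℝ) : ℂ) ^ s * (((q : ℂ)) ^ (-s) - 1)
      + ∑' k : ℕ, (-1 : ℂ) ^ k * (∏ i ∈ Finset.range (k + 1), (s + (i : ℂ))) /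
          ((k + 1).factorial : ℂ) *
          ((q ^ n / qNum q n : ℝ) : ℂ) ^ (s + (k : ℂ) + 1) := by
  have hN := one_le_qNum hq0.le hq1 hn
  set x := q ^ n / qNum q n with hx
  have hx0 : 0 < x := by positivity
  have hx1 : x < 1 := by
    rw [hx, div_lt_one (by linarith)]
    linarith [pow_lt_one₀ hq0.le hq1 (by omega : n ≠ 0)]
  refine ⟨summable_norm_neg_one_pow_mul_prod_div_factorial_mul_cpow hx0 hx1 s, ?_⟩
  have hbase₁ : qNum q n / q ^ (n - 1) = q * x⁻¹ := by
    rw [hx, inv_div, ← pow_sub_one_mul (by omega : n ≠ 0)]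
    field_simp
  have hbase₂ : qNum q n / q ^ n + 1 = (1 + x) * x⁻¹ := by
    rw [hx]
    field_simp
  rw [(hasSum_neg_one_pow_mul_prod_div_factorial_mul_cpow hx0 hx1 s).tsum_eq, hbase₁, hbase₂,
    ofReal_mul_inv_cpow_neg hq0.le hx0, ofReal_mul_inv_cpow_neg (by linarith) hx0]
  push_cast
  ring
end

section
/- Let (a_{i,j}) be real or complex numbers and let G_n be the determinant of the n×n matrix whose (i,j) entry is (-1)^{j-i} a_{i,j} for j ≥ i, is a_{i,j} for j = i-1, and 0 for j < i-1 (a sign-modified upper Hessenberg matrix). Then G_n = \sum_{σ} a_{1,σ(1)} a_{2,σ(2)} \cdots a_{n,σ(n)}, where the sum is over all permutations σ of {1,...,n} satisfying σ(j) ≥ j-1 for all 2 ≤ j ≤ n. -/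
open Finset

lemma hess_sign_aux (n : ℕ) : ∀ (N : ℕ) (σ : Equiv.Perm (Fin n)),
    (∀ i : Fin n, (i : ℕ) - 1 ≤ (σ i : ℕ)) →
    (∑ i : Fin n, ((σ i : ℕ) - (i : ℕ))) = N →
    Equiv.Perm.sign σ = (-1 : ℤˣ) ^ N := by
  intro N
  induction N with
  | zero =>
    intro σ h hN
    have hle : ∀ i : Fin n, (σ i : ℕ) ≤ (i : ℕ) := fun i =>
      Nat.le_of_sub_eq_zero (Finset.sum_eq_zero_iff.mp hN i (mem_univ i))
    have hfix : ∀ m : ℕ, ∀ i : Fin n, (i : ℕ) = m → σ i = i := by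
      intro m
      induction m using Nat.strong_induction_on with
      | _ m ih2 =>
        intro i him
        by_contra hne
        have hlt : (σ i : ℕ) < (i : ℕ) :=
          lt_of_le_of_ne (hle i) (fun h' => hne (Fin.ext h'))
        have h2 : σ (σ i) = σ i := ih2 ((σ i : ℕ)) (him ▸ hlt) (σ i) rfl
        exact hne (σ.injective h2)
    have : σ = 1 := Equiv.ext fun i => hfix (i : ℕ) i rfl
    simp [this]
  | succ N ih =>
    intro σ h hN
    -- find minimal non-fixed point
    have hTne : (Finset.univ.filter (fun i : Fin n => σ i ≠ i)).Nonempty := by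
      by_contra hemp
      rw [Finset.not_nonempty_iff_eq_empty, Finset.filter_eq_empty_iff] at hemp
      have : σ = 1 := Equiv.ext fun i => not_not.mp (hemp (mem_univ i))
      rw [this] at hN
      simp at hN
    set i : Fin n := (Finset.univ.filter (fun i : Fin n => σ i ≠ i)).min' hTne with hi
    have hiT : σ i ≠ i := (Finset.mem_filter.mp ((Finset.univ.filter
      (fun i : Fin n => σ i ≠ i)).min'_mem hTne)).2
    have hmin : ∀ j : Fin n, j < i → σ j = j := by
      intro j hj
      by_contra hj'
      exact absurd (Finset.min'_le _ j (Finset.mem_filter.mpr ⟨mem_univ j, hj'⟩))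
        (not_le.mpr hj)
    have hgt : (i : ℕ) < (σ i : ℕ) := by
      rcases lt_trichotomy ((σ i : ℕ)) ((i : ℕ)) with hl | he | hg
      · exfalso
        have : σ (σ i) = σ i := hmin (σ i) hl
        exact hiT (σ.injective this)
      · exact absurd (Fin.ext he) hiT
      · exact hg
    have hi1 : (i : ℕ) + 1 < n := lt_of_le_of_lt hgt (σ i).isLt
    set i' : Fin n := ⟨(i : ℕ) + 1, hi1⟩ with hi'
    have hne' : i ≠ i' := by
      intro hc
      have := congrArg Fin.val hc
      simp [hi'] at this
    have hσi' : σ i' = i := by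
      set j : Fin n := σ.symm i with hj
      have hσj : σ j = i := σ.apply_symm_apply i
      have hji : j ≠ i := by
        intro hc; rw [hc] at hσj; exact hiT hσj
      have hjge : ¬ (j < i) := by
        intro hc
        exact hji (hσj ▸ (hmin j hc)).symm
      have hjgt : (i : ℕ) < (j : ℕ) := by
        rcases lt_trichotomy ((j : ℕ)) ((i : ℕ)) with hl | he | hg
        · exact absurd hl hjge
        · exact absurd (Fin.ext he) hji
        · exact hg
      have := h j
      rw [hσj] at this
      have : (j : ℕ) = (i : ℕ) + 1 := by omega
      have : j = i' := Fin.ext (by simp [hi', this])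
      rw [← this, hσj]
    set σ' : Equiv.Perm (Fin n) := σ * Equiv.swap i i' with hσ'
    have hσ'i : σ' i = i := by
      simp [hσ', Equiv.Perm.mul_apply, Equiv.swap_apply_left, hσi']
    have hσ'i' : σ' i' = σ i := by
      simp [hσ', Equiv.Perm.mul_apply, Equiv.swap_apply_right]
    have hσ'other : ∀ k : Fin n, k ≠ i → k ≠ i' → σ' k = σ k := by
      intro k h1 h2
      simp [hσ', Equiv.Perm.mul_apply, Equiv.swap_apply_of_ne_of_ne h1 h2]
    have h' : ∀ k : Fin n, (k : ℕ) - 1 ≤ (σ' k : ℕ) := by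
      intro k
      by_cases h1 : k = i
      · rw [h1, hσ'i]; omega
      · by_cases h2 : k = i'
        · rw [h2, hσ'i']
          simp [hi']
          omega
        · rw [hσ'other k h1 h2]; exact h k
    have hsum' : (∑ k : Fin n, ((σ' k : ℕ) - (k : ℕ))) = N := by
      have key : ∀ g : Fin n → ℕ, ∑ k : Fin n, g k
          = g i + g i' + ∑ k ∈ (Finset.univ.erase i).erase i', g k := by
        intro g
        rw [← Finset.add_sum_erase _ g (mem_univ i)]
        rw [← Finset.add_sum_erase _ g (Finset.mem_erase.mpr ⟨Ne.symm hne', mem_univ i'⟩)]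
        ring
      have hrest : ∑ k ∈ (Finset.univ.erase i).erase i', ((σ' k : ℕ) - (k : ℕ))
          = ∑ k ∈ (Finset.univ.erase i).erase i', ((σ k : ℕ) - (k : ℕ)) := by
        apply Finset.sum_congr rfl
        intro k hk
        rw [hσ'other k (Finset.mem_erase.mp (Finset.mem_erase.mp hk).2).1
          (Finset.mem_erase.mp hk).1]
      rw [key] at hN
      rw [key (fun k => ((σ' k : ℕ) - (k : ℕ))), hrest]
      simp only [hσ'i, hσ'i', hσi'] at *
      have hv : (i' : ℕ) = (i : ℕ) + 1 := rfl
      omega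
    have hsign : Equiv.Perm.sign σ' = - Equiv.Perm.sign σ := by
      rw [hσ', Equiv.Perm.sign_mul, Equiv.Perm.sign_swap hne', mul_neg_one]
    have hthis := ih σ' h' hsum'
    rw [hsign] at hthis
    rw [pow_succ, mul_neg_one, ← hthis, neg_neg]
theorem hessenberg_det_perm_sum {R : Type*} [CommRing R] (n : ℕ)
    (a : Fin n → Fin n → R) :
    (Matrix.of fun i j : Fin n =>
        if (i : ℕ) ≤ j then (-1 : R) ^ ((j : ℕ) - i) * a i j
        else if (j : ℕ) + 1 = i then a i j
        else 0).det
    = ∑ σ ∈ Finset.univ.filter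
        (fun σ : Equiv.Perm (Fin n) => ∀ j : Fin n, 1 ≤ (j : ℕ) → (j : ℕ) - 1 ≤ (σ j : ℕ)),
        ∏ i : Fin n, a i (σ i) := by
  rw [← Matrix.det_transpose, Matrix.det_apply]
  simp only [Matrix.transpose_apply, Matrix.of_apply]
  rw [← Finset.sum_filter_add_sum_filter_not Finset.univ
    (fun σ : Equiv.Perm (Fin n) => ∀ j : Fin n, 1 ≤ (j : ℕ) → (j : ℕ) - 1 ≤ (σ j : ℕ))]
  have hzero : ∑ σ ∈ Finset.univ.filter
      (fun σ : Equiv.Perm (Fin n) => ¬ ∀ j : Fin n, 1 ≤ (j : ℕ) → (j : ℕ) - 1 ≤ (σ j : ℕ)),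
      (Equiv.Perm.sign σ) • ∏ i : Fin n,
        (if (i : ℕ) ≤ (σ i : ℕ) then (-1 : R) ^ ((σ i : ℕ) - (i : ℕ)) * a i (σ i)
         else if (σ i : ℕ) + 1 = (i : ℕ) then a i (σ i) else 0) = 0 := by
    apply Finset.sum_eq_zero
    intro σ hσ
    rw [Finset.mem_filter] at hσ
    push_neg at hσ
    obtain ⟨j, hj1, hj2⟩ := hσ.2
    have hprod : (∏ i : Fin n,
        (if (i : ℕ) ≤ (σ i : ℕ) then (-1 : R) ^ ((σ i : ℕ) - (i : ℕ)) * a i (σ i)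
         else if (σ i : ℕ) + 1 = (i : ℕ) then a i (σ i) else 0)) = 0 := by
      apply Finset.prod_eq_zero (Finset.mem_univ j)
      rw [if_neg (by omega), if_neg (by omega)]
    rw [hprod, smul_zero]
  rw [hzero, add_zero]
  apply Finset.sum_congr rfl
  intro σ hσ
  have hσP := (Finset.mem_filter.mp hσ).2
  have h' : ∀ k : Fin n, (k : ℕ) - 1 ≤ (σ k : ℕ) := by
    intro k
    by_cases hk : 1 ≤ (k : ℕ)
    · exact hσP k hk
    · omega
  have hE : ∀ i : Fin n,
      (if (i : ℕ) ≤ (σ i : ℕ) then (-1 : R) ^ ((σ i : ℕ) - (i : ℕ)) * a i (σ i)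
       else if (σ i : ℕ) + 1 = (i : ℕ) then a i (σ i) else 0)
      = (-1 : R) ^ ((σ i : ℕ) - (i : ℕ)) * a i (σ i) := by
    intro i
    by_cases hc : (i : ℕ) ≤ (σ i : ℕ)
    · rw [if_pos hc]
    · have hk := h' i
      rw [if_neg hc, if_pos (by omega), show ((σ i : ℕ) - (i : ℕ)) = 0 by omega,
        pow_zero, one_mul]
  rw [Finset.prod_congr rfl (fun i _ => hE i), Finset.prod_mul_distrib,
    Finset.prod_pow_eq_pow_sum]
  have hs := hess_sign_aux n (∑ i : Fin n, ((σ i : ℕ) - (i : ℕ))) σ h' rfl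
  rw [hs, Units.smul_def]
  push_cast
  rw [zsmul_eq_mul]
  push_cast
  rw [← mul_assoc, ← pow_add]
  rw [Even.neg_one_pow ⟨_, rfl⟩, one_mul]
end

section
/- Let A be an n×n upper Hessenberg matrix over a commutative ring with entries A_{i,j} = 0 for j < i-1. Let d_0 = 1 and d_k = det of the top-left k×k submatrix. Then d_k = A_{k,k} d_{k-1} + \sum_{i=1}^{k-1} (-1)^{k-i} A_{i,k} (\prod_{j=i}^{k-1} A_{j+1,j}) d_{i-1} for all 1 ≤ k ≤ n. -/
open Finset

/-- Entry of an `n × n` matrix read with natural-number indices (0 outside range). -/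
def natEntry {R : Type*} [CommRing R] {n : ℕ} (A : Matrix (Fin n) (Fin n) R)
    (i j : ℕ) : R :=
  if h : i < n ∧ j < n then A ⟨i, h.1⟩ ⟨j, h.2⟩ else 0

/-- Determinant of the top-left `k × k` submatrix (0-padded beyond `n`, but we only
use it for `k ≤ n`). -/
noncomputable def topDet {R : Type*} [CommRing R] {n : ℕ} (A : Matrix (Fin n) (Fin n) R)
    (k : ℕ) : R :=
  (Matrix.of fun i j : Fin k => natEntry A i j).det

lemma natEntry_zero {R : Type*} [CommRing R] {n : ℕ} {A : Matrix (Fin n) (Fin n) R}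
    (hA : ∀ i j : Fin n, (j : ℕ) + 1 < (i : ℕ) → A i j = 0)
    {i j : ℕ} (h : j + 1 < i) : natEntry A i j = 0 := by
  unfold natEntry
  split
  · exact hA _ _ h
  · rfl

/-- The minor of the `(m+1)×(m+1)` leading block obtained by deleting row `i`
and the last column. -/
noncomputable def minorMat {R : Type*} [CommRing R] {n : ℕ} (A : Matrix (Fin n) (Fin n) R)
    (i m : ℕ) : Matrix (Fin m) (Fin m) R :=
  Matrix.of fun r c => natEntry A (if (r : ℕ) < i then (r : ℕ) else (r : ℕ) + 1) (c : ℕ)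

lemma minor_det_aux {R : Type*} [CommRing R] {n : ℕ} (A : Matrix (Fin n) (Fin n) R)
    (hA : ∀ i j : Fin n, (j : ℕ) + 1 < (i : ℕ) → A i j = 0) (i t : ℕ) :
    (minorMat A i (i + t)).det =
      (∏ j ∈ Finset.Ico i (i + t), natEntry A (j + 1) j) * topDet A i := by
  induction t with
  | zero =>
    simp only [Nat.add_zero, Finset.Ico_self, Finset.prod_empty, one_mul]
    unfold minorMat topDet
    congr 1
    ext r c
    simp [r.isLt]
  | succ t ih =>
    have hsz : i + (t + 1) = (i + t) + 1 := by omega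
    rw [hsz]
    rw [Matrix.det_succ_row _ (Fin.last (i + t))]
    rw [Finset.sum_eq_single (Fin.last (i + t))]
    · have hlast : ((Fin.last (i + t) : Fin (i + t + 1)) : ℕ) = i + t := rfl
      have hdiag : minorMat A i (i + t + 1) (Fin.last (i + t)) (Fin.last (i + t)) =
          natEntry A (i + t + 1) (i + t) := by
        simp [minorMat, hlast]
      have hsub : (minorMat A i (i + t + 1)).submatrix ((Fin.last (i + t)).succAbove)
          ((Fin.last (i + t)).succAbove) = minorMat A i (i + t) := by
        rw [Fin.succAbove_last]
        ext r c
        simp [minorMat, Matrix.submatrix, Fin.coe_castSucc]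
      rw [hdiag, hsub, ih, Finset.prod_Ico_succ_top (Nat.le_add_right i t)]
      rw [hlast]
      rw [← two_mul, pow_mul, neg_one_sq, one_pow, one_mul]
      ring
    · intro j _ hj
      have hjlt : (j : ℕ) < i + t := by
        have := j.isLt
        rcases Nat.lt_or_ge (j : ℕ) (i + t) with h | h
        · exact h
        · exfalso; apply hj; ext; simp; omega
      have : minorMat A i (i + t + 1) (Fin.last (i + t)) j = 0 := by
        have hlast : ((Fin.last (i + t) : Fin (i + t + 1)) : ℕ) = i + t := rfl
        have hni : ¬ (i + t < i) := by omega
        simp only [minorMat, Matrix.of_apply, hlast, if_neg hni]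
        exact natEntry_zero hA (by omega)
      rw [this, mul_zero, zero_mul]
    · intro h
      exact absurd (Finset.mem_univ _) h

lemma minor_det {R : Type*} [CommRing R] {n : ℕ} (A : Matrix (Fin n) (Fin n) R)
    (hA : ∀ i j : Fin n, (j : ℕ) + 1 < (i : ℕ) → A i j = 0)
    {i m : ℕ} (h : i ≤ m) :
    (minorMat A i m).det =
      (∏ j ∈ Finset.Ico i m, natEntry A (j + 1) j) * topDet A i := by
  obtain ⟨t, rfl⟩ := Nat.exists_eq_add_of_le h
  exact minor_det_aux A hA i t

theorem hessenberg_det_recurrence {R : Type*} [CommRing R] (n : ℕ)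
    (A : Matrix (Fin n) (Fin n) R)
    (hA : ∀ i j : Fin n, (j : ℕ) + 1 < (i : ℕ) → A i j = 0)
    (k : ℕ) (hk1 : 1 ≤ k) (hkn : k ≤ n) :
    topDet A k = natEntry A (k - 1) (k - 1) * topDet A (k - 1) +
      ∑ i ∈ Finset.range (k - 1),
        (-1 : R) ^ (k - 1 - i) * natEntry A i (k - 1) *
          (∏ j ∈ Finset.Ico i (k - 1), natEntry A (j + 1) j) * topDet A i := by
  obtain ⟨m, rfl⟩ : ∃ m, k = m + 1 := ⟨k - 1, by omega⟩
  simp only [Nat.add_sub_cancel]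
  have expand : topDet A (m + 1) =
      ∑ r : Fin (m + 1), (-1 : R) ^ ((r : ℕ) + m) *
        natEntry A (r : ℕ) m * (minorMat A (r : ℕ) m).det := by
    unfold topDet
    rw [Matrix.det_succ_column _ (Fin.last m)]
    refine Finset.sum_congr rfl fun r _ => ?_
    have h1 : ((Fin.last m : Fin (m + 1)) : ℕ) = m := rfl
    have h2 : (Matrix.of fun i j : Fin (m + 1) => natEntry A i j).submatrix
        r.succAbove ((Fin.last m).succAbove) = minorMat A (r : ℕ) m := by
      rw [Fin.succAbove_last]
      ext r' c
      simp only [Matrix.submatrix_apply, Matrix.of_apply, minorMat, Fin.coe_castSucc]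
      congr 1
      rcases Nat.lt_or_ge ((r' : ℕ)) (r : ℕ) with h | h
      · rw [Fin.succAbove_of_castSucc_lt _ _ (by simpa [Fin.lt_def] using h)]
        simp [h]
      · rw [Fin.succAbove_of_le_castSucc _ _ (by simpa [Fin.le_def] using h)]
        simp [Fin.val_succ, Nat.not_lt.mpr h]
    rw [h1, h2]
    rfl
  rw [expand, Fin.sum_univ_castSucc]
  have hlastterm : (-1 : R) ^ (((Fin.last m : Fin (m+1)) : ℕ) + m) *
      natEntry A ((Fin.last m : Fin (m+1)) : ℕ) m *
      (minorMat A ((Fin.last m : Fin (m+1)) : ℕ) m).det =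
      natEntry A m m * topDet A m := by
    have h1 : ((Fin.last m : Fin (m + 1)) : ℕ) = m := rfl
    rw [h1, ← two_mul, pow_mul, neg_one_sq, one_pow, one_mul,
      minor_det A hA (le_refl m)]
    simp
  rw [hlastterm, add_comm]
  congr 1
  simp only [Fin.coe_castSucc]
  rw [Fin.sum_univ_eq_sum_range
    (fun r => (-1 : R) ^ (r + m) * natEntry A r m * (minorMat A r m).det)]
  refine Finset.sum_congr rfl fun r hr => ?_
  have hrm : r < m := Finset.mem_range.mp hr
  rw [minor_det A hA (le_of_lt hrm)]
  have hsign : (-1 : R) ^ (r + m) = (-1 : R) ^ (m - r) := by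
    have h : r + m = (m - r) + 2 * r := by omega
    rw [h, pow_add, pow_mul, neg_one_sq, one_pow, mul_one]
  rw [hsign]
  ring
end
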